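/- Let μ, μ_1,…,μ_n be probability distributions on a nonempty finite set Ω. If the family {μ_1,…,μ_n} strictly preserves positivity (SPP) with respect to μ, then for every index j there exist weights q_1,…,q_n ≥ 0 with Σ q_i = 1, q_j > 0, and μ = Σ_{i=1}^n q_i μ_i. -/

import Mathlib

/-!
Apply Farkas' lemma to the generators `ν i - μ` and the target `μ - ν j`. A nonnegative
representation `μ - ν j = ∑ q i • (ν i - μ)` rearranges to `(1 + ∑ q) • μ = ν j + ∑ q i • ν i`,
a convex combination with positive `j`-th weight after normalising. A separating `u` instead,
shifted by a constant so that `E_μ[u] = 0`, has `E_{ν i}[u] ≥ 0` for all `i` and `E_{ν j}[u] > 0`,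
which SPP forbids.
-/

open Finset

/-- Strictly preserves positivity (SPP). -/
def SPP {Ω : Type} [Fintype Ω] {n : ℕ} (ν : Fin n → Ω → ℝ) (μ : Ω → ℝ) : Prop :=
  ∀ u : Ω → ℝ, (∑ ω, μ ω * u ω) = 0 → (∀ i, 0 ≤ ∑ ω, ν i ω * u ω) →
    ∀ i, (∑ ω, ν i ω * u ω) = 0

open Matrix

section Farkas

variable {𝕜 Ω : Type*} [Field 𝕜] [Fintype Ω]

/-- The projection of `x` along `a` onto the hyperplane `{y | y ⬝ᵥ u = 0}`. -/
def projAlong (a u x : Ω → 𝕜) : Ω → 𝕜 := x - (x ⬝ᵥ u / a ⬝ᵥ u) • a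

lemma dotProduct_projAlong (a u x w : Ω → 𝕜) :
    x ⬝ᵥ projAlong u a w = projAlong a u x ⬝ᵥ w := by
  simp only [projAlong, dotProduct_sub, sub_dotProduct, dotProduct_smul, smul_dotProduct,
    smul_eq_mul, dotProduct_comm a w, dotProduct_comm u a]
  ring

lemma projAlong_self {a u : Ω → 𝕜} (h : a ⬝ᵥ u ≠ 0) : projAlong a u a = 0 := by
  simp [projAlong, div_self h]

variable [LinearOrder 𝕜] [IsStrictOrderedRing 𝕜]

lemma exists_nonneg_sum_cons_eq_of_projAlong {n : ℕ} {a u b : Ω → 𝕜} {v : Fin n → Ω → 𝕜}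
    (ha : a ⬝ᵥ u < 0) (hv : ∀ i, 0 ≤ v i ⬝ᵥ u) (hb : b ⬝ᵥ u < 0) {q : Fin n → 𝕜} (hq : 0 ≤ q)
    (hqb : ∑ i, q i • projAlong a u (v i) = projAlong a u b) :
    ∃ q' : Fin (n + 1) → 𝕜, 0 ≤ q' ∧ ∑ i, q' i • Fin.cons a v i = b := by
  set c := b ⬝ᵥ u / a ⬝ᵥ u - ∑ i, q i * (v i ⬝ᵥ u / a ⬝ᵥ u)
  have hc : 0 ≤ c := by
    have : ∑ i, q i * (v i ⬝ᵥ u / a ⬝ᵥ u) ≤ 0 := sum_nonpos fun i _ =>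
      mul_nonpos_of_nonneg_of_nonpos (hq i) (div_nonpos_of_nonneg_of_nonpos (hv i) ha.le)
    have : 0 < b ⬝ᵥ u / a ⬝ᵥ u := div_pos_of_neg_of_neg hb ha
    linarith
  refine ⟨Fin.cons c q, fun i => Fin.cases hc (fun i => hq i) i, ?_⟩
  simp only [projAlong, smul_sub, sum_sub_distrib, smul_smul, ← sum_smul] at hqb
  rw [Fin.sum_univ_succ]
  simp only [Fin.cons_zero, Fin.cons_succ, c]
  linear_combination (norm := module) hqb

/-- Farkas' lemma, by Fourier–Motzkin elimination of the first generator. -/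
theorem farkas_alternative {n : ℕ} (v : Fin n → Ω → 𝕜) (b : Ω → 𝕜) :
    (∃ q : Fin n → 𝕜, 0 ≤ q ∧ ∑ i, q i • v i = b) ∨
      ∃ u : Ω → 𝕜, (∀ i, 0 ≤ v i ⬝ᵥ u) ∧ b ⬝ᵥ u < 0 := by
  induction n generalizing b with
  | zero =>
    by_cases hb : b = 0
    · exact .inl ⟨0, le_rfl, by simp [hb]⟩
    · refine .inr ⟨-b, finZeroElim, ?_⟩
      rw [dotProduct_neg, neg_lt_zero]
      exact (Fintype.sum_nonneg fun ω => mul_self_nonneg (b ω)).lt_of_ne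
        (Ne.symm (mt dotProduct_self_eq_zero.1 hb))
  | succ n ih =>
    obtain ⟨a, v, rfl⟩ : ∃ a v', v = Fin.cons a v' := ⟨v 0, Fin.tail v, (Fin.cons_self_tail v).symm⟩
    rcases ih v b with ⟨q, hq, hqb⟩ | ⟨u, hu, hbu⟩
    · refine .inl ⟨Fin.cons 0 q, fun i => Fin.cases le_rfl (fun i => hq i) i, ?_⟩
      simpa [Fin.sum_univ_succ] using hqb
    by_cases ha : 0 ≤ a ⬝ᵥ u
    · exact .inr ⟨u, fun i => Fin.cases ha hu i, hbu⟩
    replace ha := not_le.1 ha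
    rcases ih (fun i => projAlong a u (v i)) (projAlong a u b) with ⟨q, hq, hqb⟩ | ⟨w, hw, hbw⟩
    · exact .inl (exists_nonneg_sum_cons_eq_of_projAlong ha hu hbu hq hqb)
    · refine .inr ⟨projAlong u a w, Fin.cases ?_ fun i => ?_, ?_⟩
      · rw [dotProduct_projAlong]; exact hbw
      · rw [Fin.cons_zero, dotProduct_projAlong, projAlong_self ha.ne, zero_dotProduct]
      · rw [Fin.cons_succ, dotProduct_projAlong]; exact hw i

end Farkas

lemma exists_convex_weights_of_sum_smul_sub_eq {𝕜 ι E : Type*} [Field 𝕜] [LinearOrder 𝕜]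
    [IsStrictOrderedRing 𝕜] [Fintype ι] [DecidableEq ι] [AddCommGroup E] [Module 𝕜 E]
    {μ : E} {ν : ι → E} {j : ι} {q : ι → 𝕜} (hq : 0 ≤ q)
    (h : ∑ i, q i • (ν i - μ) = μ - ν j) :
    ∃ p : ι → 𝕜, 0 ≤ p ∧ ∑ i, p i = 1 ∧ 0 < p j ∧ ∑ i, p i • ν i = μ := by
  have hS : 0 < 1 + ∑ i, q i := by linarith [sum_nonneg fun i (_ : i ∈ univ) => hq i]
  have hμ : ∑ i, q i • ν i + ν j = (1 + ∑ i, q i) • μ := by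
    simp only [smul_sub, sum_sub_distrib, ← sum_smul] at h
    linear_combination (norm := module) h
  refine ⟨(1 + ∑ i, q i)⁻¹ • (q + Pi.single j 1),
    smul_nonneg (inv_nonneg.2 hS.le) (add_nonneg hq (Pi.single_nonneg.2 zero_le_one)), ?_, ?_, ?_⟩
  · simp only [Pi.smul_apply, Pi.add_apply, smul_eq_mul, ← mul_sum, sum_add_distrib,
      sum_pi_single', mem_univ, if_true]
    field_simp
    ring
  · simpa using mul_pos (inv_pos.2 hS) (by linarith [show (0 : 𝕜) ≤ q j from hq j])
  · simp only [Pi.smul_apply, Pi.add_apply, smul_eq_mul, mul_smul, ← smul_sum, add_smul,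
      sum_add_distrib, Pi.single_apply, ite_smul, one_smul, zero_smul, sum_ite_eq', mem_univ,
      if_true]
    rw [hμ, inv_smul_smul₀ hS.ne']

lemma SPP.dotProduct_eq_of_le {Ω : Type} [Fintype Ω] {n : ℕ} {ν : Fin n → Ω → ℝ} {μ : Ω → ℝ}
    (h : SPP ν μ) (hμ : ∑ ω, μ ω = 1) (hν : ∀ i, ∑ ω, ν i ω = 1) (u : Ω → ℝ)
    (hu : ∀ i, μ ⬝ᵥ u ≤ ν i ⬝ᵥ u) (i : Fin n) : ν i ⬝ᵥ u = μ ⬝ᵥ u := by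
  have centered (x : Ω → ℝ) (hx : ∑ ω, x ω = 1) : x ⬝ᵥ (u - (μ ⬝ᵥ u) • 1) = x ⬝ᵥ u - μ ⬝ᵥ u := by
    rw [dotProduct_sub, dotProduct_smul, dotProduct_one, hx, smul_eq_mul, mul_one]
  have hi : ν i ⬝ᵥ (u - (μ ⬝ᵥ u) • 1) = 0 := h _ ((centered μ hμ).trans (sub_self _))
    (fun k => (sub_nonneg.2 (hu k)).trans_eq (centered (ν k) (hν k)).symm) i
  linarith [centered (ν i) (hν i)]

theorem stmt_11_general {Ω : Type} [Fintype Ω] {n : ℕ}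
    (μ : Ω → ℝ) (hμ1 : (∑ ω, μ ω) = 1)
    (ν : Fin n → Ω → ℝ) (hν : ∀ i, (∀ ω, 0 ≤ ν i ω) ∧ ((∑ ω, ν i ω) = 1))
    (hSPP : SPP ν μ) :
    ∀ j : Fin n, ∃ q : Fin n → ℝ, (∀ i, 0 ≤ q i) ∧ ((∑ i, q i) = 1) ∧ 0 < q j ∧
      (∀ ω, μ ω = ∑ i, q i * ν i ω) := by
  intro j
  rcases farkas_alternative (fun i => ν i - μ) (μ - ν j) with ⟨q, hq, hqb⟩ | ⟨u, hu, hbu⟩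
  · obtain ⟨p, hp, hp1, hpj, hpμ⟩ := exists_convex_weights_of_sum_smul_sub_eq hq hqb
    refine ⟨p, hp, hp1, hpj, fun ω => ?_⟩
    simp [← hpμ, Finset.sum_apply]
  · simp only [sub_dotProduct, sub_nonneg] at hu hbu
    have := hSPP.dotProduct_eq_of_le hμ1 (fun i => (hν i).2) u hu j
    linarith

/-- Lemma 2: if `{μ_1,…,μ_n}` strictly preserves positivity with
respect to `μ`, then for every index `j` there is a convex combination
`μ = ∑ q_i μ_i` with `q_j > 0`. -/
theorem stmt_11 {Ω : Type} [Fintype Ω] [Nonempty Ω] {n : ℕ}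
    (μ : Ω → ℝ) (hμ0 : ∀ ω, 0 ≤ μ ω) (hμ1 : (∑ ω, μ ω) = 1)
    (ν : Fin n → Ω → ℝ) (hν : ∀ i, (∀ ω, 0 ≤ ν i ω) ∧ ((∑ ω, ν i ω) = 1))
    (hSPP : SPP ν μ) :
    ∀ j : Fin n, ∃ q : Fin n → ℝ, (∀ i, 0 ≤ q i) ∧ ((∑ i, q i) = 1) ∧ 0 < q j ∧
      (∀ ω, μ ω = ∑ i, q i * ν i ω) :=
  stmt_11_general μ hμ1 ν hν hSPP
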